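/- Tangents with positive y-intercept only occur beyond a reference point on the concave part: let g : ℝ → ℝ be differentiable, let 0 ≤ a ≤ c ≤ p be real numbers, and suppose that (i) g(r) = 0 for all r ≤ a, (ii) g is convex on (−∞, c], (iii) g is concave on [c, ∞), and (iv) the tangent of g at p meets the vertical axis at or below 0, i.e. g(p) − p · (deriv g p) ≤ 0. Then for every r ∈ [a, p] one has g(r) − r · (deriv g r) ≤ 0; equivalently, any tangent line of g intersecting the vertical axis strictly above 0 is a tangent at some point r > p. -/

import Mathlib

/-!
On the convex part a tangent lies below the graph, so it meets the vertical axis below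
`g 0 = 0`. On the concave part the intercept `g r - r * g' r` is nondecreasing in `r ≥ 0`,
because `g'` is nonincreasing there; hence it is bounded by its value at `p`.
-/

open Set

noncomputable def tangentIntercept (g : ℝ → ℝ) (r : ℝ) : ℝ := g r - r * deriv g r

section Tangent

variable {s : Set ℝ} {g : ℝ → ℝ} {x y : ℝ}

theorem ConvexOn.add_deriv_mul_sub_le (hg : ConvexOn ℝ s g) (hx : x ∈ s) (hy : y ∈ s)
    (hdx : DifferentiableAt ℝ g x) : g x + deriv g x * (y - x) ≤ g y := by
  rcases lt_trichotomy x y with hxy | rfl | hyx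
  · have h := hg.deriv_le_slope hx hy hxy hdx
    rw [slope_def_field, le_div_iff₀ (sub_pos.mpr hxy)] at h
    linarith
  · simp
  · have h := hg.slope_le_deriv hy hx hyx hdx
    rw [slope_def_field, div_le_iff₀ (sub_pos.mpr hyx)] at h
    linarith

theorem ConcaveOn.le_add_deriv_mul_sub (hg : ConcaveOn ℝ s g) (hx : x ∈ s) (hy : y ∈ s)
    (hdx : DifferentiableAt ℝ g x) : g y ≤ g x + deriv g x * (y - x) := by
  have h := hg.neg.add_deriv_mul_sub_le hx hy hdx.neg
  simp only [Pi.neg_apply, deriv.neg'] at h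
  linarith

theorem ConcaveOn.monotoneOn_tangentIntercept (hg : ConcaveOn ℝ s g)
    (hd : ∀ x ∈ s, DifferentiableAt ℝ g x) : MonotoneOn (tangentIntercept g) (s ∩ Ici 0) := by
  rintro x ⟨hx, hx0⟩ y ⟨hy, -⟩ hxy
  have hgx := hg.le_add_deriv_mul_sub hy hx (hd y hy)
  have hanti := mul_le_mul_of_nonneg_left (hg.antitoneOn_deriv hd hx hy hxy) (mem_Ici.mp hx0)
  unfold tangentIntercept
  linarith

end Tangent

theorem tangent_intercept_nonpos_on_Icc_general
    (g : ℝ → ℝ) (hg : Differentiable ℝ g)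
    (a c p : ℝ) (ha : 0 ≤ a)
    (hzero : ∀ r ≤ a, g r = 0)
    (hconv : ConvexOn ℝ (Set.Iic c) g)
    (hconc : ConcaveOn ℝ (Set.Ici c) g)
    (hp : g p - p * deriv g p ≤ 0) :
    ∀ r ∈ Set.Icc a p, g r - r * deriv g r ≤ 0 := by
  rintro r ⟨har, hrp⟩
  have hr0 : 0 ≤ r := ha.trans har
  rcases le_total r c with hrc | hcr
  · have h := hconv.add_deriv_mul_sub_le (y := 0) hrc (hr0.trans hrc) (hg r)
    linarith [hzero 0 ha]
  · exact (hconc.monotoneOn_tangentIntercept (fun x _ ↦ hg x) ⟨hcr, hr0⟩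
      ⟨hcr.trans hrp, hr0.trans hrp⟩ hrp).trans hp

/-- Tangents with positive y-intercept only occur beyond a reference point on the
concave part: if `g` vanishes on `(−∞, a]`, is convex on `(−∞, c]`, concave on
`[c, ∞)` with `0 ≤ a ≤ c ≤ p`, and the tangent of `g` at `p` meets the vertical axis
at or below `0`, then for every `r ∈ [a, p]` the tangent of `g` at `r` meets the
vertical axis at or below `0`. -/
theorem tangent_intercept_nonpos_on_Icc
    (g : ℝ → ℝ) (hg : Differentiable ℝ g)
    (a c p : ℝ) (ha : 0 ≤ a) (hac : a ≤ c) (hcp : c ≤ p)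
    (hzero : ∀ r ≤ a, g r = 0)
    (hconv : ConvexOn ℝ (Set.Iic c) g)
    (hconc : ConcaveOn ℝ (Set.Ici c) g)
    (hp : g p - p * deriv g p ≤ 0) :
    ∀ r ∈ Set.Icc a p, g r - r * deriv g r ≤ 0 :=
  tangent_intercept_nonpos_on_Icc_general g hg a c p ha hzero hconv hconc hp
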